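/- Let H be a connected hypergraph with rank k and positive Perron vector x for ρ = ρ(A_H), and let (i1,…,ik) be a tuple with (A_H)_{i1…ik} ≠ 0 maximizing x_{i1}⋯x_{ik} over all nonzero positions of A_H. Then for each j ∈ {1,…,k}, ρ x_{ij}^k ≤ d_{ij} · x_{i1}⋯x_{ik}, and hence ρ^k ≤ d_{i1} d_{i2} ⋯ d_{ik}. -/

import Mathlib

open Finset

/-- The multiset of entries of an index tuple. -/
def idxMultiset {n k : ℕ} (idx : Fin k → Fin n) : Multiset (Fin n) := ↑(List.ofFn idx)

/-- Entries of the adjacency tensor of a general hypergraph with edge set `E` and rank `k`: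
`1/(k-1)!` on tuples that are permutations of an edge of size `k`;
`(k-s+1)!/k!` on tuples whose multiset is an edge of size `s < k` with one of its
vertices repeated `k-s+1` times; `0` otherwise. -/
noncomputable def adjEntry {R : Type*} [Field R] {n : ℕ} (k : ℕ)
    (E : Finset (Finset (Fin n))) (idx : Fin k → Fin n) : R :=
  ∑ e ∈ E,
    if e.card = k ∧ idxMultiset idx = e.val then 1 / (Nat.factorial (k - 1) : R)
    else if e.card < k ∧ ∃ j ∈ e, idxMultiset idx = e.val + Multiset.replicate (k - e.card) j then
      (Nat.factorial (k - e.card + 1) : R) / (Nat.factorial k : R)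
    else 0

/-- Full contraction `A x^k = ∑ a_{i₁…i_k} x_{i₁} ⋯ x_{i_k}`. -/
noncomputable def tFull {R : Type*} [CommRing R] {n : ℕ} (k : ℕ)
    (A : (Fin k → Fin n) → R) (x : Fin n → R) : R :=
  ∑ idx : Fin k → Fin n, A idx * ∏ j, x (idx j)

/-- `(A x^{k-1})_i = ∑_{i₂,…,i_k} a_{i i₂ … i_k} x_{i₂} ⋯ x_{i_k}`. -/
noncomputable def tApply {R : Type*} [CommRing R] {n : ℕ} (k : ℕ) [NeZero k]
    (A : (Fin k → Fin n) → R) (x : Fin n → R) (i : Fin n) : R :=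
  ∑ idx : Fin k → Fin n,
    if idx 0 = i then A idx * ∏ j ∈ Finset.univ.erase 0, x (idx j) else 0

/-- Degree of a vertex: the number of edges containing it. -/
def deg {n : ℕ} (E : Finset (Finset (Fin n))) (i : Fin n) : ℕ :=
  (E.filter (fun e => i ∈ e)).card

/-- `E` has rank `k`: all edges have size at most `k` and some edge has size `k`. -/
def HasRank {n : ℕ} (E : Finset (Finset (Fin n))) (k : ℕ) : Prop :=
  (∀ e ∈ E, e.card ≤ k) ∧ ∃ e ∈ E, e.card = k

/-- Connectedness of a hypergraph: any two vertices are joined by a sequence of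
vertices consecutively sharing an edge. -/
def Conn {n : ℕ} (E : Finset (Finset (Fin n))) : Prop :=
  ∀ u v : Fin n, Relation.ReflTransGen (fun a b => ∃ e ∈ E, a ∈ e ∧ b ∈ e) u v

/-- The spectral radius of a symmetric nonnegative tensor, via the variational
characterization `ρ(A) = max { x^T (A x^{k-1}) : x ≥ 0, ∑ xᵢ^k = 1 }`. -/
noncomputable def specRad {n : ℕ} (k : ℕ) (A : (Fin k → Fin n) → ℝ) : ℝ :=
  sSup {r : ℝ | ∃ x : Fin n → ℝ, (∀ i, 0 ≤ x i) ∧ ∑ i, x i ^ k = 1 ∧ r = tFull k A x}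

/-!
Multiplying the eigenvalue equation at a vertex `i` by `x_i` writes `ρ x_i^k` as the sum of
`a_f x_{f_1} ⋯ x_{f_k}` over the tuples `f` with `f_1 = i`. Each monomial with `a_f ≠ 0` is at most
the maximal one `x_{i_1} ⋯ x_{i_k}`, and the entries of the row of `i` sum to at most `d_i`, because
every edge through `i` contributes exactly `1`. This gives `ρ x_i^k ≤ d_i x_{i_1} ⋯ x_{i_k}`;
multiplying over `i = i_1, …, i_k` and cancelling `(x_{i_1} ⋯ x_{i_k})^k` gives `ρ^k ≤ ∏ d_{i_j}`.

The row sums are a counting problem: a multiset `M` of size `k` is the content of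
`k! / ∏_b (count b M)!` tuples, `(k-1)! count_i M / ∏_b (count b M)!` of which start with `i`.
-/

open Nat

lemma coe_ofFn_vecCons {α : Type*} {m : ℕ} (i : α) (g : Fin m → α) :
    (List.ofFn (Matrix.vecCons i g) : Multiset α) = i ::ₘ (List.ofFn g : Multiset α) := by
  simp [List.ofFn_succ]

section TupleCount
variable {α : Type*} [Fintype α] [DecidableEq α]

lemma card_ofFn_head_cons (m : ℕ) (i : α) (N : Multiset α) :
    #{f : Fin (m + 1) → α | f 0 = i ∧ (List.ofFn f : Multiset α) = i ::ₘ N} =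
      #{g : Fin m → α | (List.ofFn g : Multiset α) = N} := by
  symm
  refine card_nbij' (Matrix.vecCons i) Matrix.vecTail ?_ ?_ ?_ ?_
  · intro g hg
    simp only [coe_filter, mem_univ, true_and] at hg ⊢
    exact ⟨rfl, by rw [coe_ofFn_vecCons, hg]⟩
  · intro f hf
    simp only [coe_filter, mem_univ, true_and] at hf ⊢
    obtain ⟨h0, hf⟩ := hf
    rwa [← Matrix.cons_head_tail f, Matrix.vecHead, h0, coe_ofFn_vecCons,
      Multiset.cons_inj_right] at hf
  · intro g _
    exact Matrix.tail_cons i g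
  · intro f hf
    simp only [coe_filter, mem_univ, true_and] at hf
    rw [← hf.1]
    exact Matrix.cons_head_tail f

lemma prod_factorial_count_cons (a : α) (N : Multiset α) :
    ∏ b, ((a ::ₘ N).count b)! = (N.count a + 1) * ∏ b, (N.count b)! := by
  rw [← mul_prod_erase _ _ (mem_univ a),
    ← mul_prod_erase univ (fun b => (N.count b)!) (mem_univ a), Multiset.count_cons_self,
    factorial_succ, mul_assoc]
  congr 2
  refine prod_congr rfl fun b hb => ?_
  rw [Multiset.count_cons_of_ne (ne_of_mem_erase hb)]

lemma card_ofFn_head_mul_prod_factorial (m : ℕ) (i : α) (M : Multiset α) :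
    #{f : Fin (m + 1) → α | f 0 = i ∧ (List.ofFn f : Multiset α) = M} * ∏ b, (M.count b)! =
      M.count i * (#{g : Fin m → α | (List.ofFn g : Multiset α) = M.erase i} *
        ∏ b, ((M.erase i).count b)!) := by
  by_cases hi : i ∈ M
  · obtain ⟨N, rfl⟩ := Multiset.exists_cons_of_mem hi
    rw [card_ofFn_head_cons, prod_factorial_count_cons, Multiset.erase_cons_head,
      Multiset.count_cons_self]
    ring
  · have hempty : #{f : Fin (m + 1) → α | f 0 = i ∧ (List.ofFn f : Multiset α) = M} = 0 := by
      refine card_eq_zero.mpr (filter_eq_empty_iff.mpr ?_)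
      rintro f - ⟨rfl, rfl⟩
      exact hi (by simp [List.ofFn_succ])
    rw [hempty, Multiset.count_eq_zero_of_notMem hi, zero_mul, zero_mul]

lemma card_ofFn_mul_prod_factorial (m : ℕ) (M : Multiset α) (hM : Multiset.card M = m) :
    #{f : Fin m → α | (List.ofFn f : Multiset α) = M} * ∏ b, (M.count b)! = m ! := by
  induction m generalizing M with
  | zero =>
    obtain rfl := Multiset.card_eq_zero.mp hM
    simp
  | succ m ih =>
    have hfib : #{f : Fin (m + 1) → α | (List.ofFn f : Multiset α) = M} =
        ∑ i, #{f : Fin (m + 1) → α | f 0 = i ∧ (List.ofFn f : Multiset α) = M} := by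
      rw [card_eq_sum_card_fiberwise (f := fun f => f 0) (t := univ) fun _ _ => mem_univ _]
      simp only [filter_filter, and_comm]
    have hterm : ∀ i, #{f : Fin (m + 1) → α | f 0 = i ∧ (List.ofFn f : Multiset α) = M} *
        ∏ b, (M.count b)! = M.count i * m ! := by
      intro i
      rw [card_ofFn_head_mul_prod_factorial]
      by_cases hi : i ∈ M
      · rw [ih _ (by rw [Multiset.card_erase_of_mem hi, hM]; rfl)]
      · rw [Multiset.count_eq_zero_of_notMem hi, zero_mul, zero_mul]
    rw [hfib, sum_mul, sum_congr rfl fun i _ => hterm i, ← sum_mul,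
      Multiset.sum_count_eq_card fun a _ => mem_univ a, hM, factorial_succ]

lemma card_ofFn_head_mul_prod_factorial_eq {k : ℕ} [NeZero k] (i : α) (M : Multiset α)
    (hM : Multiset.card M = k) :
    #{f : Fin k → α | f 0 = i ∧ (List.ofFn f : Multiset α) = M} * ∏ b, (M.count b)! =
      (k - 1)! * M.count i := by
  obtain ⟨m, rfl⟩ := Nat.exists_eq_succ_of_ne_zero (NeZero.ne k)
  rw [card_ofFn_head_mul_prod_factorial]
  by_cases hi : i ∈ M
  · rw [card_ofFn_mul_prod_factorial m _ (by rw [Multiset.card_erase_of_mem hi, hM]; rfl)]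
    simp [mul_comm]
  · rw [Multiset.count_eq_zero_of_notMem hi, zero_mul, mul_zero]

end TupleCount

noncomputable def edgeEntry {R : Type*} [Field R] {n : ℕ} (k : ℕ) (e : Finset (Fin n))
    (idx : Fin k → Fin n) : R :=
  if e.card = k ∧ idxMultiset idx = e.val then 1 / ((k - 1)! : R)
  else if e.card < k ∧ ∃ j ∈ e, idxMultiset idx = e.val + Multiset.replicate (k - e.card) j then
    ((k - e.card + 1)! : R) / (k ! : R)
  else 0

lemma adjEntry_eq_sum_edgeEntry {R : Type*} [Field R] {n k : ℕ} (E : Finset (Finset (Fin n)))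
    (idx : Fin k → Fin n) : (adjEntry k E idx : R) = ∑ e ∈ E, edgeEntry k e idx :=
  rfl

lemma edgeEntry_nonneg {n k : ℕ} (e : Finset (Fin n)) (idx : Fin k → Fin n) :
    0 ≤ (edgeEntry k e idx : ℝ) := by
  unfold edgeEntry
  split_ifs <;> positivity

lemma prod_factorial_count_of_nodup {α : Type*} [Fintype α] [DecidableEq α] {M : Multiset α}
    (hM : M.Nodup) : ∏ b, (M.count b)! = 1 :=
  prod_eq_one fun b _ => by
    rw [Multiset.count_eq_of_nodup hM]
    split_ifs <;> rfl

lemma prod_factorial_count_add_replicate {α : Type*} [Fintype α] [DecidableEq α] {e : Finset α}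
    {j : α} (hj : j ∈ e) (m : ℕ) :
    ∏ b, ((e.val + Multiset.replicate m j).count b)! = (m + 1)! := by
  rw [prod_eq_single j]
  · simp [Multiset.count_eq_of_nodup e.nodup, hj, add_comm]
  · intro b _ hb
    rw [Multiset.count_add, Multiset.count_replicate, if_neg (Ne.symm hb), add_zero,
      Multiset.count_eq_of_nodup e.nodup]
    split_ifs <;> rfl
  · simp

lemma sum_count_add_replicate {α : Type*} [DecidableEq α] (e : Finset α) (m : ℕ) (i : α) :
    ∑ j ∈ e, (e.val + Multiset.replicate m j).count i = if i ∈ e then e.card + m else 0 := by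
  simp only [Multiset.count_add, Multiset.count_replicate, sum_add_distrib,
    Multiset.count_eq_of_nodup e.nodup, Finset.mem_val, sum_const, smul_eq_mul, sum_ite_eq']
  split_ifs <;> simp

section EdgeRowSum
variable {n k : ℕ} [NeZero k]

lemma sum_edgeEntry_head_of_card_eq {e : Finset (Fin n)} (he : e.card = k) (i : Fin n) :
    ∑ f : Fin k → Fin n with f 0 = i, (edgeEntry k e f : ℝ) = if i ∈ e then 1 else 0 := by
  have hf : ∀ f : Fin k → Fin n, (edgeEntry k e f : ℝ) =
      if (List.ofFn f : Multiset (Fin n)) = e.val then 1 / ((k - 1)! : ℝ) else 0 := by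
    intro f
    simp [edgeEntry, he, idxMultiset]
  have hcount := card_ofFn_head_mul_prod_factorial_eq i e.val he
  rw [prod_factorial_count_of_nodup e.nodup, mul_one, Multiset.count_eq_of_nodup e.nodup] at hcount
  simp only [Finset.mem_val] at hcount
  rw [sum_congr rfl fun f _ => hf f, sum_ite, sum_const_zero, add_zero, sum_const, filter_filter,
    nsmul_eq_mul, hcount]
  split_ifs <;> simp [factorial_ne_zero]

lemma sum_edgeEntry_head_le_of_card_lt {e : Finset (Fin n)} (he : e.card < k) (i : Fin n) :
    ∑ f : Fin k → Fin n with f 0 = i, (edgeEntry k e f : ℝ) ≤ if i ∈ e then 1 else 0 := by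
  set m := k - e.card with hm
  set w : ℝ := ((m + 1)! : ℝ) / (k ! : ℝ)
  -- The repeated vertex `j` is determined by the tuple, but the union bound over `j` suffices.
  have hf : ∀ f : Fin k → Fin n, (edgeEntry k e f : ℝ) ≤ ∑ j ∈ e,
      if (List.ofFn f : Multiset (Fin n)) = e.val + Multiset.replicate m j then w else 0 := by
    intro f
    rw [edgeEntry, if_neg fun h => he.ne h.1]
    split_ifs with h
    · obtain ⟨-, j, hj, hfj⟩ := h
      calc w = if (List.ofFn f : Multiset (Fin n)) = e.val + Multiset.replicate m j then w else 0 :=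
            (if_pos hfj).symm
        _ ≤ _ := single_le_sum (f := fun j => if (List.ofFn f : Multiset (Fin n)) =
            e.val + Multiset.replicate m j then w else 0) (fun _ _ => by positivity) hj
    · exact sum_nonneg fun _ _ => by positivity
  have hcount : ∀ j ∈ e, (#{f : Fin k → Fin n | f 0 = i ∧
      (List.ofFn f : Multiset (Fin n)) = e.val + Multiset.replicate m j} : ℝ) * w =
        ((e.val + Multiset.replicate m j).count i : ℝ) / k := by
    intro j hj
    have h := card_ofFn_head_mul_prod_factorial_eq (k := k) i (e.val + Multiset.replicate m j)
      (by simp only [Multiset.card_add, Finset.card_val, Multiset.card_replicate]; omega)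
    rw [prod_factorial_count_add_replicate hj] at h
    have hk : (k ! : ℝ) = k * (k - 1)! := by
      exact_mod_cast (Nat.mul_factorial_pred (NeZero.ne k)).symm
    have h' : (#{f : Fin k → Fin n | f 0 = i ∧
        (List.ofFn f : Multiset (Fin n)) = e.val + Multiset.replicate m j} : ℝ) * (m + 1)! =
          (k - 1)! * (e.val + Multiset.replicate m j).count i := by
      exact_mod_cast h
    have hk0 : (k : ℝ) ≠ 0 := Nat.cast_ne_zero.mpr (NeZero.ne k)
    simp only [w, hk]
    field_simp
    linear_combination h'
  calc ∑ f : Fin k → Fin n with f 0 = i, (edgeEntry k e f : ℝ)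
      ≤ ∑ f : Fin k → Fin n with f 0 = i, ∑ j ∈ e,
          if (List.ofFn f : Multiset (Fin n)) = e.val + Multiset.replicate m j then w else 0 :=
        sum_le_sum fun f _ => hf f
    _ = ∑ j ∈ e, (#{f : Fin k → Fin n | f 0 = i ∧
          (List.ofFn f : Multiset (Fin n)) = e.val + Multiset.replicate m j} : ℝ) * w := by
        rw [sum_comm]
        refine sum_congr rfl fun j _ => ?_
        rw [sum_ite, sum_const_zero, add_zero, sum_const, filter_filter, nsmul_eq_mul]
    _ = ∑ j ∈ e, ((e.val + Multiset.replicate m j).count i : ℝ) / k := sum_congr rfl hcount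
    _ = if i ∈ e then 1 else 0 := by
        rw [← sum_div, ← Nat.cast_sum, sum_count_add_replicate, hm, Nat.add_sub_cancel' he.le]
        split_ifs
        · exact div_self (Nat.cast_ne_zero.mpr (NeZero.ne k))
        · simp

lemma sum_edgeEntry_head_le (e : Finset (Fin n)) (i : Fin n) :
    ∑ f : Fin k → Fin n with f 0 = i, (edgeEntry k e f : ℝ) ≤ if i ∈ e then 1 else 0 := by
  rcases lt_trichotomy e.card k with hlt | heq | hgt
  · exact sum_edgeEntry_head_le_of_card_lt hlt i
  · exact (sum_edgeEntry_head_of_card_eq heq i).le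
  · have hzero : ∀ f : Fin k → Fin n, (edgeEntry k e f : ℝ) = 0 := fun f => by
      simp [edgeEntry, hgt.ne', hgt.not_gt]
    simp only [hzero, sum_const_zero]
    split_ifs <;> norm_num

lemma sum_adjEntry_head_le_deg (E : Finset (Finset (Fin n))) (i : Fin n) :
    ∑ f : Fin k → Fin n with f 0 = i, (adjEntry k E f : ℝ) ≤ deg E i := by
  simp only [adjEntry_eq_sum_edgeEntry]
  rw [sum_comm, deg, natCast_card_filter]
  exact sum_le_sum fun e _ => sum_edgeEntry_head_le e i

end EdgeRowSum

section PerronBound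
variable {n k : ℕ} [NeZero k] {A : (Fin k → Fin n) → ℝ} {x : Fin n → ℝ}

lemma tApply_mul_self {R : Type*} [CommRing R] (A : (Fin k → Fin n) → R) (x : Fin n → R)
    (i : Fin n) :
    tApply k A x i * x i = ∑ f : Fin k → Fin n with f 0 = i, A f * ∏ t, x (f t) := by
  rw [tApply, sum_mul, sum_filter]
  refine sum_congr rfl fun f _ => ?_
  split_ifs with h0
  · rw [mul_assoc, ← h0, prod_erase_mul univ (fun t => x (f t)) (mem_univ 0)]
  · rw [zero_mul]

lemma tApply_nonneg (hA : ∀ f, 0 ≤ A f) (hx : ∀ i, 0 ≤ x i) (i : Fin n) : 0 ≤ tApply k A x i :=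
  sum_nonneg fun f _ => by
    split_ifs
    · exact mul_nonneg (hA f) (prod_nonneg fun t _ => hx _)
    · exact le_rfl

lemma mul_pow_le_sum_head_mul_prod (hA : ∀ f, 0 ≤ A f) {ρ : ℝ}
    (heig : ∀ i, tApply k A x i = ρ * x i ^ (k - 1)) {idx : Fin k → Fin n}
    (hmax : ∀ f, A f ≠ 0 → ∏ t, x (f t) ≤ ∏ t, x (idx t)) (i : Fin n) :
    ρ * x i ^ k ≤ (∑ f : Fin k → Fin n with f 0 = i, A f) * ∏ t, x (idx t) := by
  calc ρ * x i ^ k = tApply k A x i * x i := by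
        rw [heig, mul_assoc, ← pow_succ, Nat.sub_add_cancel (NeZero.one_le)]
    _ = ∑ f : Fin k → Fin n with f 0 = i, A f * ∏ t, x (f t) := tApply_mul_self A x i
    _ ≤ ∑ f : Fin k → Fin n with f 0 = i, A f * ∏ t, x (idx t) := by
        refine sum_le_sum fun f _ => ?_
        rcases eq_or_ne (A f) 0 with hf | hf
        · rw [hf, zero_mul, zero_mul]
        · exact mul_le_mul_of_nonneg_left (hmax f hf) (hA f)
    _ = (∑ f : Fin k → Fin n with f 0 = i, A f) * ∏ t, x (idx t) := (sum_mul ..).symm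

end PerronBound

lemma pow_le_prod_of_mul_pow_le {k : ℕ} {ρ : ℝ} (hρ : 0 ≤ ρ) {y d : Fin k → ℝ}
    (hy : ∀ j, 0 < y j) (h : ∀ j, ρ * y j ^ k ≤ d j * ∏ t, y t) : ρ ^ k ≤ ∏ j, d j := by
  have hP : 0 < ∏ t, y t := prod_pos fun t _ => hy t
  have hprod := prod_le_prod (s := univ) (fun j _ => mul_nonneg hρ (pow_nonneg (hy j).le k))
    fun j _ => h j
  rw [prod_mul_distrib, prod_mul_distrib, prod_const, prod_const, prod_pow, Finset.card_univ,
    Fintype.card_fin] at hprod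
  exact le_of_mul_le_mul_right hprod (pow_pos hP k)

theorem stmt19_general {n k : ℕ} [NeZero k] (E : Finset (Finset (Fin n)))
    (x : Fin n → ℝ) (hx : ∀ i, 0 < x i)
    (heig : ∀ i, tApply k (adjEntry k E) x i = specRad k (adjEntry k E) * x i ^ (k - 1))
    (idx : Fin k → Fin n)
    (hmax : ∀ idx' : Fin k → Fin n, (adjEntry k E idx' : ℝ) ≠ 0 →
      ∏ j, x (idx' j) ≤ ∏ j, x (idx j)) :
    (∀ j : Fin k, specRad k (adjEntry k E) * x (idx j) ^ k ≤
      (deg E (idx j) : ℝ) * ∏ t, x (idx t)) ∧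
    specRad k (adjEntry k E) ^ k ≤ ∏ j, (deg E (idx j) : ℝ) := by
  have hA : ∀ f, 0 ≤ (adjEntry k E f : ℝ) := fun f => sum_nonneg fun e _ => edgeEntry_nonneg e f
  have hbound : ∀ i, specRad k (adjEntry k E) * x i ^ k ≤ (deg E i : ℝ) * ∏ t, x (idx t) :=
    fun i => (mul_pow_le_sum_head_mul_prod hA heig hmax i).trans <|
      mul_le_mul_of_nonneg_right (sum_adjEntry_head_le_deg E i) (prod_pos fun t _ => hx _).le
  have hρ : 0 ≤ specRad k (adjEntry k E) := by
    have h := tApply_nonneg hA (fun i => (hx i).le) (idx 0)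
    rw [heig] at h
    exact nonneg_of_mul_nonneg_left h (pow_pos (hx _) _)
  exact ⟨fun j => hbound (idx j),
    pow_le_prod_of_mul_pow_le hρ (fun j => hx (idx j)) fun j => hbound (idx j)⟩

/-- with a positive Perron vector `x` for `ρ = ρ(A_H)` and a nonzero
entry position `(i₁,…,i_k)` maximizing `x_{i₁}⋯x_{i_k}`, for each `j` one has
`ρ x_{i_j}^k ≤ d_{i_j} x_{i₁}⋯x_{i_k}`, and hence `ρ^k ≤ d_{i₁}⋯d_{i_k}`. -/
theorem stmt19 {n k : ℕ} [NeZero k] (E : Finset (Finset (Fin n)))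
    (hE : ∀ e ∈ E, e.Nonempty) (hconn : Conn E) (hrank : HasRank E k)
    (x : Fin n → ℝ) (hx : ∀ i, 0 < x i)
    (heig : ∀ i, tApply k (adjEntry k E) x i = specRad k (adjEntry k E) * x i ^ (k - 1))
    (idx : Fin k → Fin n) (hnz : (adjEntry k E idx : ℝ) ≠ 0)
    (hmax : ∀ idx' : Fin k → Fin n, (adjEntry k E idx' : ℝ) ≠ 0 →
      ∏ j, x (idx' j) ≤ ∏ j, x (idx j)) :
    (∀ j : Fin k, specRad k (adjEntry k E) * x (idx j) ^ k ≤
      (deg E (idx j) : ℝ) * ∏ t, x (idx t)) ∧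
    specRad k (adjEntry k E) ^ k ≤ ∏ j, (deg E (idx j) : ℝ) :=
  stmt19_general E x hx heig idx hmax
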